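/- No nondisjunctive nested program is strongly equivalent to the program { p;q } consisting of the single rule with head the disjunction p;q and body ⊤, where p and q are distinct atoms. -/

import Mathlib

open scoped Classical

inductive Lit where
  | pos : ℕ → Lit
  | neg : ℕ → Lit
deriving DecidableEq

inductive Fml where
  | bot : Fml
  | top : Fml
  | lit : Lit → Fml
  | not : Fml → Fml
  | conj : Fml → Fml → Fml
  | disj : Fml → Fml → Fml
deriving DecidableEq

structure Rule where
  head : Fml
  body : Fml
deriving DecidableEq

abbrev Prog := Set Rule

/-- A set of literals is consistent if it contains no complementary pair. -/
def Consistent (X : Set Lit) : Prop :=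
  ∀ a : ℕ, ¬ (Lit.pos a ∈ X ∧ Lit.neg a ∈ X)

def Sat (X : Set Lit) : Fml → Prop
  | Fml.bot => False
  | Fml.top => True
  | Fml.lit l => l ∈ X
  | Fml.not F => ¬ Sat X F
  | Fml.conj F G => Sat X F ∧ Sat X G
  | Fml.disj F G => Sat X F ∨ Sat X G

def SatRule (X : Set Lit) (r : Rule) : Prop := Sat X r.body → Sat X r.head

def SatProg (X : Set Lit) (P : Prog) : Prop := ∀ r ∈ P, SatRule X r

/-- The reduct of a formula relative to X. -/
noncomputable def Reduct (X : Set Lit) : Fml → Fml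
  | Fml.bot => Fml.bot
  | Fml.top => Fml.top
  | Fml.lit l => Fml.lit l
  | Fml.not F => if Sat X F then Fml.bot else Fml.top
  | Fml.conj F G => Fml.conj (Reduct X F) (Reduct X G)
  | Fml.disj F G => Fml.disj (Reduct X F) (Reduct X G)

noncomputable def ReductRule (X : Set Lit) (r : Rule) : Rule :=
  ⟨Reduct X r.head, Reduct X r.body⟩

noncomputable def ReductProg (X : Set Lit) (P : Prog) : Prog :=
  ReductRule X '' P

/-- Y is an answer set for P: Y is minimal among consistent sets satisfying the reduct of P w.r.t. Y. -/
def AnswerSet (Y : Set Lit) (P : Prog) : Prop :=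
  Consistent Y ∧ SatProg Y (ReductProg Y P) ∧
    ∀ Z : Set Lit, Consistent Z → SatProg Z (ReductProg Y P) → Z ⊆ Y → Z = Y

def SEModel (P : Prog) (X Y : Set Lit) : Prop :=
  Consistent X ∧ Consistent Y ∧ X ⊆ Y ∧ SatProg Y P ∧ SatProg X (ReductProg Y P)

def StrongEq (P Q : Prog) : Prop :=
  ∀ R : Prog, ∀ Y : Set Lit, AnswerSet Y (P ∪ R) ↔ AnswerSet Y (Q ∪ R)

def Fml.negFree : Fml → Prop
  | Fml.bot => True
  | Fml.top => True
  | Fml.lit l => ∃ a, l = Lit.pos a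
  | Fml.not F => F.negFree
  | Fml.conj F G => F.negFree ∧ G.negFree
  | Fml.disj F G => F.negFree ∧ G.negFree

def ProgNegFree (P : Prog) : Prop := ∀ r ∈ P, r.head.negFree ∧ r.body.negFree

/-- The set of atoms (positive literals) in a set of literals. -/
def PosLits (Z : Set Lit) : Set Lit := {l ∈ Z | ∃ a, l = Lit.pos a}

def AtomsOnly (Z : Set Lit) : Prop := ∀ l ∈ Z, ∃ a, l = Lit.pos a

def Fml.elementary (F : Fml) : Prop :=
  F = Fml.bot ∨ F = Fml.top ∨ ∃ l : Lit, F = Fml.lit l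

def NdHead (F : Fml) : Prop :=
  F.elementary ∨ ∃ G : Fml, F = Fml.not G ∧ G.elementary

def Nondisjunctive (P : Prog) : Prop := ∀ r ∈ P, NdHead r.head

/-! Strongly equivalent programs have the same SE-models. For a nondisjunctive program, the
sets `X` with `(X, Y)` an SE-model are closed under intersection: reducing a head `not G`
yields `⊥` or `⊤`, and an elementary head holds in `X₁ ∩ X₂` once it holds in `X₁` and `X₂`.
For `Y = {p, q}`, both `({p}, Y)` and `({q}, Y)` are SE-models of `{p;q}`, but `(∅, Y)` is not. -/

lemma Consistent.mono {X Y : Set Lit} (hY : Consistent Y) (hXY : X ⊆ Y) : Consistent X :=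
  fun a ha => hY a ⟨hXY ha.1, hXY ha.2⟩

lemma AtomsOnly.consistent {X : Set Lit} (hX : AtomsOnly X) : Consistent X := by
  rintro a ⟨-, ha⟩
  obtain ⟨b, hb⟩ := hX _ ha
  cases hb

lemma StrongEq.symm {P Q : Prog} (h : StrongEq P Q) : StrongEq Q P :=
  fun R Y => (h R Y).symm

lemma sat_reduct_self_iff (Y : Set Lit) (F : Fml) : Sat Y (Reduct Y F) ↔ Sat Y F := by
  induction F with
  | bot | top | lit => rfl
  | not F => by_cases h : Sat Y F <;> simp [Reduct, Sat, h]
  | conj F G ihF ihG | disj F G ihF ihG => simp only [Reduct, Sat, ihF, ihG]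

lemma sat_reduct_mono {X X' : Set Lit} (h : X ⊆ X') (Y : Set Lit) (F : Fml) :
    Sat X (Reduct Y F) → Sat X' (Reduct Y F) := by
  induction F with
  | bot | top => exact id
  | lit l => exact fun hl => h hl
  | not F => by_cases hc : Sat Y F <;> simp [Reduct, Sat, hc]
  | conj F G ihF ihG => exact fun hx => ⟨ihF hx.1, ihG hx.2⟩
  | disj F G ihF ihG => exact Or.imp ihF ihG

lemma satProg_reductProg_self_iff (Y : Set Lit) (P : Prog) :
    SatProg Y (ReductProg Y P) ↔ SatProg Y P := by
  simp only [SatProg, ReductProg, Set.forall_mem_image, SatRule, ReductRule, sat_reduct_self_iff]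

lemma satProg_union_iff (X : Set Lit) (P R : Prog) :
    SatProg X (P ∪ R) ↔ SatProg X P ∧ SatProg X R :=
  forall₂_or_left

lemma reductProg_union (Y : Set Lit) (P R : Prog) :
    ReductProg Y (P ∪ R) = ReductProg Y P ∪ ReductProg Y R :=
  Set.image_union _ _ _

def factsProg (X : Set Lit) : Prog :=
  (fun l => ⟨Fml.lit l, Fml.top⟩) '' X

def cycleProg (S : Set Lit) : Prog :=
  Set.image2 (fun a b => ⟨Fml.lit a, Fml.lit b⟩) S S

lemma satProg_reductProg_factsProg_iff (Z Y X : Set Lit) :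
    SatProg Z (ReductProg Y (factsProg X)) ↔ X ⊆ Z := by
  simp [SatProg, ReductProg, factsProg, SatRule, ReductRule, Reduct, Sat, Set.subset_def]

lemma satProg_reductProg_cycleProg_iff (Z Y S : Set Lit) :
    SatProg Z (ReductProg Y (cycleProg S)) ↔ ∀ a ∈ S, ∀ b ∈ S, b ∈ Z → a ∈ Z := by
  simp only [SatProg, ReductProg, Set.forall_mem_image, cycleProg, Set.forall_mem_image2, SatRule,
    ReductRule, Reduct, Sat]

lemma answerSet_union_factsProg {P : Prog} {Y : Set Lit} (hY : Consistent Y)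
    (hYP : SatProg Y (ReductProg Y P)) : AnswerSet Y (P ∪ factsProg Y) := by
  simp only [AnswerSet, reductProg_union, satProg_union_iff, satProg_reductProg_factsProg_iff]
  exact ⟨hY, ⟨hYP, subset_rfl⟩, fun Z _ hZ hZY => hZY.antisymm hZ.2⟩

/-- The added rules have no model strictly between `X` and `Y`, so `Y` is minimal as soon as
`X` fails the reduct of `P`. -/
lemma answerSet_union_factsProg_cycleProg {P : Prog} {X Y : Set Lit} (hY : Consistent Y)
    (hXY : X ⊆ Y) (hYP : SatProg Y (ReductProg Y P)) (hXP : ¬ SatProg X (ReductProg Y P)) :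
    AnswerSet Y (P ∪ (factsProg X ∪ cycleProg (Y \ X))) := by
  simp only [AnswerSet, reductProg_union, satProg_union_iff, satProg_reductProg_factsProg_iff,
    satProg_reductProg_cycleProg_iff]
  refine ⟨hY, ⟨hYP, hXY, fun a ha _ _ _ => ha.1⟩, fun Z _ ⟨hZP, hXZ, hZcycle⟩ hZY => ?_⟩
  by_cases hZX : Z ⊆ X
  · exact absurd (hZX.antisymm hXZ ▸ hZP) hXP
  · obtain ⟨b, hbZ, hbX⟩ := Set.not_subset.mp hZX
    refine hZY.antisymm fun a haY => ?_
    by_cases haX : a ∈ X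
    · exact hXZ haX
    · exact hZcycle a ⟨haY, haX⟩ b ⟨hZY hbZ, hbX⟩ hbZ

lemma StrongEq.satProg_reductProg {P Q : Prog} {Y : Set Lit} (h : StrongEq P Q)
    (hY : Consistent Y) (hYP : SatProg Y (ReductProg Y P)) : SatProg Y (ReductProg Y Q) := by
  have hA := ((h _ Y).mp (answerSet_union_factsProg hY hYP)).2.1
  rw [reductProg_union, satProg_union_iff] at hA
  exact hA.1

lemma StrongEq.seModel {P Q : Prog} {X Y : Set Lit} (h : StrongEq P Q)
    (hXY : SEModel P X Y) : SEModel Q X Y := by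
  obtain ⟨hX, hY, hsub, hYP, hXP⟩ := hXY
  have hYQ : SatProg Y (ReductProg Y Q) :=
    h.satProg_reductProg hY ((satProg_reductProg_self_iff Y P).mpr hYP)
  refine ⟨hX, hY, hsub, (satProg_reductProg_self_iff Y Q).mp hYQ, ?_⟩
  by_contra hXQ
  have hA := (h.symm _ Y).mp (answerSet_union_factsProg_cycleProg hY hsub hYQ hXQ)
  have hXR : SatProg X (ReductProg Y (factsProg X ∪ cycleProg (Y \ X))) := by
    simp only [reductProg_union, satProg_union_iff, satProg_reductProg_factsProg_iff,
      satProg_reductProg_cycleProg_iff]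
    exact ⟨subset_rfl, fun _ _ _ hb hbX => absurd hbX hb.2⟩
  have hXeq : X = Y :=
    hA.2.2 X hX (by rw [reductProg_union, satProg_union_iff]; exact ⟨hXP, hXR⟩) hsub
  exact hXQ (hXeq ▸ hYQ)

lemma NdHead.sat_reduct_inter {F : Fml} (hF : NdHead F) {X₁ X₂ : Set Lit} (Y : Set Lit)
    (h₁ : Sat X₁ (Reduct Y F)) (h₂ : Sat X₂ (Reduct Y F)) : Sat (X₁ ∩ X₂) (Reduct Y F) := by
  rcases hF with (rfl | rfl | ⟨l, rfl⟩) | ⟨G, rfl, -⟩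
  · exact h₁
  · trivial
  · exact ⟨h₁, h₂⟩
  · by_cases hG : Sat Y G <;> simp only [Reduct, hG, if_true, if_false] at h₁ ⊢ <;> exact h₁

lemma SEModel.inter {P : Prog} (hP : Nondisjunctive P) {X₁ X₂ Y : Set Lit}
    (h₁ : SEModel P X₁ Y) (h₂ : SEModel P X₂ Y) : SEModel P (X₁ ∩ X₂) Y := by
  refine ⟨h₁.1.mono Set.inter_subset_left, h₁.2.1, Set.inter_subset_left.trans h₁.2.2.1,
    h₁.2.2.2.1, ?_⟩
  rintro _ ⟨r, hr, rfl⟩ hbody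
  exact (hP r hr).sat_reduct_inter Y
    (h₁.2.2.2.2 _ ⟨r, hr, rfl⟩ (sat_reduct_mono Set.inter_subset_left Y r.body hbody))
    (h₂.2.2.2.2 _ ⟨r, hr, rfl⟩ (sat_reduct_mono Set.inter_subset_right Y r.body hbody))

lemma seModel_disj_iff (a b : Lit) (X Y : Set Lit) :
    SEModel {⟨Fml.disj (Fml.lit a) (Fml.lit b), Fml.top⟩} X Y ↔
      Consistent X ∧ Consistent Y ∧ X ⊆ Y ∧ (a ∈ Y ∨ b ∈ Y) ∧ (a ∈ X ∨ b ∈ X) := by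
  simp [SEModel, SatProg, ReductProg, SatRule, ReductRule, Reduct, Sat]

/-- no nondisjunctive program is strongly equivalent to { p;q }. -/
theorem stmt10 (p q : ℕ) (hpq : p ≠ q) (P : Prog) (hP : Nondisjunctive P) :
    ¬ StrongEq P
        ({⟨Fml.disj (Fml.lit (Lit.pos p)) (Fml.lit (Lit.pos q)), Fml.top⟩} : Prog) := by
  intro h
  set Y : Set Lit := {Lit.pos p, Lit.pos q}
  have hY : Consistent Y := AtomsOnly.consistent (by rintro _ (rfl | rfl) <;> exact ⟨_, rfl⟩)
  have hp : SEModel P {Lit.pos p} Y := h.symm.seModel <| (seModel_disj_iff _ _ _ _).mpr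
    ⟨hY.mono (by simp [Y]), hY, by simp [Y], by simp [Y], by simp⟩
  have hq : SEModel P {Lit.pos q} Y := h.symm.seModel <| (seModel_disj_iff _ _ _ _).mpr
    ⟨hY.mono (by simp [Y]), hY, by simp [Y], by simp [Y], by simp⟩
  have hempty := ((seModel_disj_iff _ _ _ _).mp (h.seModel (hp.inter hP hq))).2.2.2.2
  simp [hpq] at hempty
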